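/- Let σ be a type and ts = [(S₁,b₁),…,(Sₙ,bₙ)] a list of n pairs of a subset of σ and a Boolean star flag, and suppose every maximal run of consecutive entries of ts whose flag is true has length at most m. Then there exist a finite type S with card S ≤ n + 3 and a deterministic finite automaton D over the product alphabet σ × Fin (m+2) with state type S such that π(D.accepts) = L(ts). -/

import Mathlib

/-- The projection of a language over a product alphabet `α × β` onto `α`,
obtained by mapping each letter of each word to its first component. -/
def projLang {α β : Type} (L : Language (α × β)) : Language α :=
  (fun w : List (α × β) => w.map Prod.fst) '' L

/-- The single-symbol language of a set `S ⊆ σ`: all length-one words whose letter lies in `S`. -/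
def singleLang {σ : Type} (S : Set σ) : Language σ := {w | ∃ a ∈ S, w = [a]}

/-- The chain language of a list `ts = [(S₁,b₁),…,(Sₙ,bₙ)]`: the concatenation
`L₁ * ⋯ * Lₙ` where `Lᵢ` is the single-symbol language of `Sᵢ` if `bᵢ = false`, and its
Kleene star if `bᵢ = true`. -/
def chainLang {σ : Type} (ts : List (Set σ × Bool)) : Language σ :=
  (ts.map fun p => if p.2 then KStar.kstar (singleLang p.1) else singleLang p.1).prod

/-!
The automaton reads a word from left to right while its state `i` records that the rest of the
word must lie in `L(drop i ts)`. The second component `c` of each letter is a guess: skip the next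
`c` factors (which must be starred, hence may be empty) and read the letter in the factor after
them, which stays open if it is starred. The guess determines the next state, so the automaton is
deterministic; and since at most `m` starred factors follow each other, the guesses `c ≤ m` already
reach every decomposition of a word of `L(ts)`.
-/

namespace DFA

variable {α β S : Type} (D : DFA (α × β) S)

theorem nil_mem_projLang_acceptsFrom {s : S} :
    [] ∈ projLang (D.acceptsFrom s) ↔ s ∈ D.accept := by
  constructor
  · rintro ⟨_ | _, hw, hwx⟩
    · exact hw
    · cases hwx
  · exact fun hs => ⟨[], hs, rfl⟩

theorem cons_mem_projLang_acceptsFrom {s : S} {a : α} {x : List α} :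
    a :: x ∈ projLang (D.acceptsFrom s) ↔ ∃ b, x ∈ projLang (D.acceptsFrom (D.step s (a, b))) := by
  constructor
  · rintro ⟨_ | ⟨⟨a', b⟩, w⟩, hw, hwx⟩
    · cases hwx
    · obtain ⟨rfl, rfl⟩ := List.cons.inj hwx
      exact ⟨b, w, hw, rfl⟩
  · rintro ⟨b, w, hw, rfl⟩
    exact ⟨(a, b) :: w, hw, rfl⟩

theorem acceptsFrom_eq_zero_of_trap {s : S} (hstep : ∀ c, D.step s c = s) (hs : s ∉ D.accept) :
    D.acceptsFrom s = 0 := by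
  ext w
  have hw : D.evalFrom s w = s := by
    induction w with
    | nil => rfl
    | cons c w ih => rwa [evalFrom_cons, hstep]
  simpa [mem_acceptsFrom, hw] using hs

end DFA

section ChainLanguage

open scoped Computability

variable {σ : Type}

theorem cons_mem_singleLang_mul {S : Set σ} {L : Language σ} {a : σ} {x : List σ} :
    a :: x ∈ singleLang S * L ↔ a ∈ S ∧ x ∈ L := by
  rw [Language.mem_mul]
  constructor
  · rintro ⟨_, ⟨b, hb, rfl⟩, y, hy, hyx⟩
    obtain ⟨rfl, rfl⟩ := List.cons.inj hyx
    exact ⟨hb, hy⟩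
  · rintro ⟨ha, hx⟩
    exact ⟨[a], ⟨a, ha, rfl⟩, x, hx, rfl⟩

theorem cons_mem_kstar_singleLang_mul {S : Set σ} {L : Language σ} {a : σ} {x : List σ} :
    a :: x ∈ (singleLang S)∗ * L ↔ a :: x ∈ L ∨ a ∈ S ∧ x ∈ (singleLang S)∗ * L := by
  conv_lhs => rw [← Language.one_add_self_mul_kstar_eq_kstar, add_mul, one_mul, mul_assoc]
  rw [Language.mem_add, cons_mem_singleLang_mul]

theorem chainLang_nil : chainLang ([] : List (Set σ × Bool)) = 1 := rfl

theorem chainLang_cons (t : Set σ × Bool) (r : List (Set σ × Bool)) :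
    chainLang (t :: r) = (if t.2 then (singleLang t.1)∗ else singleLang t.1) * chainLang r := rfl

theorem cons_mem_chainLang_cons {t : Set σ × Bool} {r : List (Set σ × Bool)} {a : σ}
    {x : List σ} :
    a :: x ∈ chainLang (t :: r) ↔
      (t.2 ∧ a :: x ∈ chainLang r) ∨ (a ∈ t.1 ∧ x ∈ chainLang (if t.2 then t :: r else r)) := by
  obtain ⟨S, _ | _⟩ := t
  · simp [chainLang_cons, cons_mem_singleLang_mul]
  · simp [chainLang_cons, cons_mem_kstar_singleLang_mul]

def entry (l : List (Set σ × Bool)) (k : ℕ) : Set σ × Bool := l.getD k (∅, false)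

@[simp] theorem entry_cons_zero (t : Set σ × Bool) (r : List (Set σ × Bool)) :
    entry (t :: r) 0 = t := rfl

@[simp] theorem entry_cons_succ (t : Set σ × Bool) (r : List (Set σ × Bool)) (k : ℕ) :
    entry (t :: r) (k + 1) = entry r k := rfl

def ReadsAt (l : List (Set σ × Bool)) (c : ℕ) (a : σ) : Prop :=
  (∀ k < c, (entry l k).2) ∧ c < l.length ∧ a ∈ (entry l c).1

def resume (l : List (Set σ × Bool)) (c : ℕ) : ℕ := if (entry l c).2 then c else c + 1

theorem readsAt_cons_zero {t : Set σ × Bool} {r : List (Set σ × Bool)} {a : σ} :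
    ReadsAt (t :: r) 0 a ↔ a ∈ t.1 := by
  simp [ReadsAt]

theorem readsAt_cons_succ {t : Set σ × Bool} {r : List (Set σ × Bool)} {c : ℕ} {a : σ} :
    ReadsAt (t :: r) (c + 1) a ↔ t.2 ∧ ReadsAt r c a := by
  simp only [ReadsAt, Nat.forall_lt_succ_left, entry_cons_zero, entry_cons_succ, List.length_cons,
    Nat.add_lt_add_iff_right, and_assoc]

theorem drop_resume_cons_zero (t : Set σ × Bool) (r : List (Set σ × Bool)) :
    (t :: r).drop (resume (t :: r) 0) = if t.2 then t :: r else r := by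
  by_cases h : t.2 <;> simp [resume, h]

theorem resume_cons_succ (t : Set σ × Bool) (r : List (Set σ × Bool)) (c : ℕ) :
    resume (t :: r) (c + 1) = resume r c + 1 := by
  unfold resume
  rw [entry_cons_succ]
  split <;> rfl

theorem cons_mem_chainLang {l : List (Set σ × Bool)} {a : σ} {x : List σ} :
    a :: x ∈ chainLang l ↔ ∃ c, ReadsAt l c a ∧ x ∈ chainLang (l.drop (resume l c)) := by
  induction l with
  | nil => simp [chainLang_nil, ReadsAt]
  | cons t r ih =>
    rw [cons_mem_chainLang_cons, ih]
    conv_rhs => rw [← Nat.or_exists_add_one]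
    simp only [readsAt_cons_zero, readsAt_cons_succ, drop_resume_cons_zero,
      resume_cons_succ, List.drop_succ_cons, and_assoc, exists_and_left]
    exact or_comm

end ChainLanguage

section ChainDFA

variable {σ : Type}

def StarRunsAtMost (ts : List (Set σ × Bool)) (m : ℕ) : Prop :=
  ∀ i, i + m < ts.length → ∃ j, i ≤ j ∧ j ≤ i + m ∧ (ts.getD j ((∅ : Set σ), false)).2 = false

theorem ReadsAt.le_of_starRunsAtMost {ts : List (Set σ × Bool)} {m i c : ℕ} {a : σ}
    (hruns : StarRunsAtMost ts m)
    (h : ReadsAt (ts.drop i) c a) : c ≤ m := by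
  by_contra! hmc
  have hlen := h.2.1
  rw [List.length_drop] at hlen
  obtain ⟨j, hij, hjm, hj⟩ := hruns i (by omega)
  have hstar := h.1 (j - i) (by omega)
  rw [entry, List.getD_eq_getElem?_getD, List.getElem?_drop, Nat.add_sub_cancel' hij,
    ← List.getD_eq_getElem?_getD, hj] at hstar
  exact Bool.false_ne_true hstar

theorem ReadsAt.add_resume_drop_lt {ts : List (Set σ × Bool)} {i c : ℕ} {a : σ}
    (h : ReadsAt (ts.drop i) c a) : i + resume (ts.drop i) c < ts.length + 1 := by
  have := h.2.1
  rw [List.length_drop] at this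
  unfold resume
  split <;> omega

open Classical in
noncomputable def chainDFA (ts : List (Set σ × Bool)) (m : ℕ) :
    DFA (σ × Fin (m + 2)) (Option (Fin (ts.length + 1))) where
  step
    | some i, (a, c) =>
      if h : ReadsAt (ts.drop i) c a then
        some ⟨i + resume (ts.drop i) c, h.add_resume_drop_lt⟩
      else none
    | none, _ => none
  start := some 0
  accept := Option.some '' {i | [] ∈ chainLang (ts.drop i)}

open Classical in
theorem chainDFA_step_some (ts : List (Set σ × Bool)) (m : ℕ) (i : Fin (ts.length + 1)) (a : σ)
    (c : Fin (m + 2)) :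
    (chainDFA ts m).step (some i) (a, c) =
      if h : ReadsAt (ts.drop i) c a then some ⟨i + resume (ts.drop i) c, h.add_resume_drop_lt⟩
      else none :=
  rfl

theorem chainDFA_acceptsFrom_none (ts : List (Set σ × Bool)) (m : ℕ) :
    (chainDFA ts m).acceptsFrom none = 0 :=
  DFA.acceptsFrom_eq_zero_of_trap _ (fun _ => rfl) (by simp [chainDFA])

theorem projLang_chainDFA_acceptsFrom {ts : List (Set σ × Bool)} {m : ℕ}
    (hruns : StarRunsAtMost ts m)
    (x : List σ) (i : Fin (ts.length + 1)) :
    x ∈ projLang ((chainDFA ts m).acceptsFrom (some i)) ↔ x ∈ chainLang (ts.drop i) := by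
  induction x generalizing i with
  | nil =>
    rw [DFA.nil_mem_projLang_acceptsFrom]
    exact Option.some_injective _ |>.mem_set_image
  | cons a x ih =>
    rw [DFA.cons_mem_projLang_acceptsFrom, cons_mem_chainLang]
    constructor
    · rintro ⟨c, hc⟩
      rw [chainDFA_step_some] at hc
      by_cases h : ReadsAt (ts.drop i) c a
      · rw [dif_pos h, ih] at hc
        exact ⟨c, h, by rw [List.drop_drop]; exact hc⟩
      · rw [dif_neg h, chainDFA_acceptsFrom_none] at hc
        obtain ⟨w, hw, -⟩ := hc
        exact absurd hw (Language.notMem_zero w)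
    · rintro ⟨c, h, hx⟩
      refine ⟨⟨c, by have := h.le_of_starRunsAtMost hruns; omega⟩, ?_⟩
      rw [chainDFA_step_some, dif_pos h, ih]
      rw [List.drop_drop] at hx
      exact hx

theorem projLang_chainDFA_accepts {ts : List (Set σ × Bool)} {m : ℕ}
    (hruns : StarRunsAtMost ts m) :
    projLang (chainDFA ts m).accepts = chainLang ts := by
  ext x
  exact (projLang_chainDFA_acceptsFrom hruns x 0).trans (by rw [Fin.val_zero, List.drop_zero])

end ChainDFA

/-- If every maximal run of consecutive starred entries of `ts` has length at most `m`
(equivalently, every window of `m+1` consecutive entries contains an unstarred one), then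
there exist a finite type `S` with `card S ≤ n + 3` and a DFA `D` over the product alphabet
`σ × Fin (m+2)` with state type `S` such that `π(D.accepts) = L(ts)`. -/
theorem chain_dfa_bounded_star_runs {σ : Type} (ts : List (Set σ × Bool)) (m : ℕ)
    (hruns : ∀ i, i + m < ts.length →
      ∃ j, i ≤ j ∧ j ≤ i + m ∧ (ts.getD j ((∅ : Set σ), false)).2 = false) :
    ∃ (S : Type) (_ : Fintype S), Fintype.card S ≤ ts.length + 3 ∧
      ∃ D : DFA (σ × Fin (m + 2)) S, projLang D.accepts = chainLang ts :=
  ⟨_, inferInstance, by simp, chainDFA ts m, projLang_chainDFA_accepts hruns⟩
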